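/- (Inclusion Principle.) Let Z, V, W be nonempty sets, S : Z × V → [0,∞) and R : Z × W → [0,∞), and let p₁, p₂, q₁, q₂ satisfy condition (★) with p₁ < p₂. Assume that for every m ∈ ℕ and all z₁, …, z_m ∈ Z the quantities sup_{w∈W} Σ_{j=1}^m R(z_j, w)^{p} (for p = p₁ and p = p₂) and sup_{v∈V} Σ_{j=1}^m S(z_j, v)^{q} (for q = q₁ and q = q₂) are finite. If there is a constant C > 0 such that sup_{v∈V} Σ_{j=1}^m S(z_j, v)^{q₁} ≤ C · sup_{w∈W} Σ_{j=1}^m R(z_j, w)^{p₁} for every m ∈ ℕ and all z₁, …, z_m ∈ Z, then (sup_{v∈V} Σ_{j=1}^m S(z_j, v)^{q₂})^{q₁p₂/(q₂p₁)} ≤ C^{p₂/p₁} · sup_{w∈W} Σ_{j=1}^m R(z_j, w)^{p₂} for every m ∈ ℕ and all z₁, …, z_m ∈ Z. -/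

import Mathlib

/-!
Repeating points turns the hypothesis into the same inequality with natural weights, and rounding
`K λ` up and letting `K → ∞` extends it to arbitrary nonnegative real weights `λ`. For fixed `v`,
testing it against `λ_j = S(z_j, v)^(q₂ - q₁)` bounds `T = ∑ S(z_j, v)^q₂` by
`C ⬝ sup_w ∑ λ_j R(z_j, w)^p₁`. Hölder with exponents `q₂/(q₂ - q₁)` and `q₂/q₁`, followed by
the inclusion `ℓ^p₂ ⊆ ℓ^(p₁q₂/q₁)` (condition (★) gives `p₁q₂/q₁ ≥ p₂`), turns this into
`T ≤ C T^(1 - q₁/q₂) B^(p₁/p₂)` with `B = sup_w ∑ R(z_j, w)^p₂`, that is `T^(q₁/q₂) ≤ C B^(p₁/p₂)`.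
-/

open Finset Filter Topology

lemma Real.sum_rpow_le_rpow_sum {ι : Type*} (s : Finset ι) {a : ι → ℝ} (ha : ∀ i, 0 ≤ a i)
    {t : ℝ} (ht : 1 ≤ t) : ∑ i ∈ s, a i ^ t ≤ (∑ i ∈ s, a i) ^ t := by
  induction s using Finset.cons_induction with
  | empty => simp [Real.zero_rpow (by linarith : t ≠ 0)]
  | cons i s hi ih =>
    rw [sum_cons, sum_cons]
    exact (add_le_add_right ih _).trans
      (Real.add_rpow_le_rpow_add (ha i) (sum_nonneg fun j _ => ha j) ht)

lemma Real.sum_rpow_rpow_inv_le_of_le {ι : Type*} (s : Finset ι) {b : ι → ℝ} (hb : ∀ i, 0 ≤ b i)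
    {p r : ℝ} (hp : 0 < p) (hpr : p ≤ r) :
    (∑ i ∈ s, b i ^ r) ^ r⁻¹ ≤ (∑ i ∈ s, b i ^ p) ^ p⁻¹ := by
  have hr : 0 < r := hp.trans_le hpr
  have hbp : ∀ i, 0 ≤ b i ^ p := fun i => Real.rpow_nonneg (hb i) p
  calc (∑ i ∈ s, b i ^ r) ^ r⁻¹ = (∑ i ∈ s, (b i ^ p) ^ (r / p)) ^ r⁻¹ := by
        congr 1
        refine sum_congr rfl fun i _ => ?_
        rw [← Real.rpow_mul (hb i), mul_div_cancel₀ _ hp.ne']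
    _ ≤ ((∑ i ∈ s, b i ^ p) ^ (r / p)) ^ r⁻¹ := by
        gcongr
        · exact sum_nonneg fun i _ => Real.rpow_nonneg (hbp i) _
        · exact Real.sum_rpow_le_rpow_sum s hbp ((one_le_div hp).2 hpr)
    _ = (∑ i ∈ s, b i ^ p) ^ p⁻¹ := by
        rw [← Real.rpow_mul (sum_nonneg fun i _ => hbp i)]
        congr 1
        field_simp

lemma Real.sum_rpow_sub_mul_rpow_le {ι : Type*} (s : Finset ι) {a b : ι → ℝ}
    (ha : ∀ i, 0 ≤ a i) (hb : ∀ i, 0 ≤ b i) {p₁ p₂ q₁ q₂ : ℝ} (hp₁ : 0 < p₁) (hp₂ : 0 < p₂)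
    (hq₁ : 0 < q₁) (hq : q₁ < q₂) (hpq : p₂ * q₁ ≤ p₁ * q₂) :
    ∑ i ∈ s, a i ^ (q₂ - q₁) * b i ^ p₁ ≤
      (∑ i ∈ s, a i ^ q₂) ^ (1 - q₁ / q₂) * (∑ i ∈ s, b i ^ p₂) ^ (p₁ / p₂) := by
  have hq₂ : 0 < q₂ := hq₁.trans hq
  have hq₂₁ : 0 < q₂ - q₁ := sub_pos.2 hq
  set r := p₁ * q₂ / q₁
  have hpr : p₂ ≤ r := by rwa [le_div_iff₀ hq₁]
  have hconj : (q₂ / (q₂ - q₁)).HolderConjugate (q₂ / q₁) := by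
    rw [Real.holderConjugate_iff]
    refine ⟨by rw [lt_div_iff₀ hq₂₁]; linarith, ?_⟩
    field_simp
    ring
  have hsum : 0 ≤ ∑ i ∈ s, b i ^ r := sum_nonneg fun i _ => Real.rpow_nonneg (hb i) r
  calc ∑ i ∈ s, a i ^ (q₂ - q₁) * b i ^ p₁
      ≤ (∑ i ∈ s, (a i ^ (q₂ - q₁)) ^ (q₂ / (q₂ - q₁))) ^ (1 / (q₂ / (q₂ - q₁))) *
          (∑ i ∈ s, (b i ^ p₁) ^ (q₂ / q₁)) ^ (1 / (q₂ / q₁)) :=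
        Real.inner_le_Lp_mul_Lq_of_nonneg s hconj (fun i _ => Real.rpow_nonneg (ha i) _)
          (fun i _ => Real.rpow_nonneg (hb i) _)
    _ = (∑ i ∈ s, a i ^ q₂) ^ (1 - q₁ / q₂) * ((∑ i ∈ s, b i ^ r) ^ r⁻¹) ^ p₁ := by
        rw [← Real.rpow_mul hsum]
        congr 2
        · refine sum_congr rfl fun i _ => ?_
          rw [← Real.rpow_mul (ha i)]
          field_simp
        · field_simp
        · refine sum_congr rfl fun i _ => ?_
          rw [← Real.rpow_mul (hb i)]
          congr 1
          simp only [r]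
          ring
        · simp only [r]
          field_simp
    _ ≤ (∑ i ∈ s, a i ^ q₂) ^ (1 - q₁ / q₂) * ((∑ i ∈ s, b i ^ p₂) ^ p₂⁻¹) ^ p₁ := by
        gcongr
        · exact Real.rpow_nonneg (sum_nonneg fun i _ => Real.rpow_nonneg (ha i) _) _
        · exact Real.sum_rpow_rpow_inv_le_of_le s hb hp₂ hpr
    _ = (∑ i ∈ s, a i ^ q₂) ^ (1 - q₁ / q₂) * (∑ i ∈ s, b i ^ p₂) ^ (p₁ / p₂) := by
        rw [← Real.rpow_mul (sum_nonneg fun i _ => Real.rpow_nonneg (hb i) _), inv_mul_eq_div]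

lemma Real.rpow_le_of_le_rpow_one_sub_mul {T X θ : ℝ} (hT : 0 ≤ T) (hθ : 0 < θ) (hX : 0 ≤ X)
    (h : T ≤ T ^ (1 - θ) * X) : T ^ θ ≤ X := by
  rcases hT.eq_or_lt with rfl | hT
  · rwa [Real.zero_rpow hθ.ne']
  have h' : T ^ (1 - θ) * T ^ θ ≤ T ^ (1 - θ) * X := by
    rwa [← Real.rpow_add hT, sub_add_cancel, Real.rpow_one]
  exact le_of_mul_le_mul_left h' (Real.rpow_pos_of_pos hT _)

lemma Real.iSup_rpow_le {ι : Sort*} {f : ι → ℝ} {e Y : ℝ} (hf : ∀ i, 0 ≤ f i) (he : 0 < e)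
    (hY : 0 ≤ Y) (h : ∀ i, f i ^ e ≤ Y) : (⨆ i, f i) ^ e ≤ Y := by
  rw [← Real.le_rpow_inv_iff_of_pos (Real.iSup_nonneg hf) hY he]
  exact Real.iSup_le (fun i => (Real.le_rpow_inv_iff_of_pos (hf i) hY he).2 (h i))
    (Real.rpow_nonneg hY _)

lemma lt_of_one_div_sub_le {p₁ p₂ q₁ q₂ : ℝ} (hp₁ : 0 < p₁) (hp : p₁ < p₂) (hq : q₁ ≤ q₂)
    (hstar : 1 / p₁ - 1 / q₁ ≤ 1 / p₂ - 1 / q₂) : q₁ < q₂ := by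
  refine hq.lt_of_ne fun hq => ?_
  subst hq
  linarith [one_div_lt_one_div_of_lt hp₁ hp]

lemma mul_le_mul_of_one_div_sub_le {p₁ p₂ q₁ q₂ : ℝ} (hp₁ : 0 < p₁) (hp₂ : 0 < p₂)
    (hq₁ : 0 < q₁) (hpq₁ : p₁ ≤ q₁) (hq : q₁ ≤ q₂)
    (hstar : 1 / p₁ - 1 / q₁ ≤ 1 / p₂ - 1 / q₂) : p₂ * q₁ ≤ p₁ * q₂ := by
  have hq₂ : 0 < q₂ := hq₁.trans_le hq
  have h₁ : 1 / q₁ ≤ 1 / p₁ := one_div_le_one_div_of_le hp₁ hpq₁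
  have h₂ : 1 / q₂ ≤ 1 / q₁ := one_div_le_one_div_of_le hq₁ hq
  -- with `a = 1/p₁, b = 1/p₂, c = 1/q₁, d = 1/q₂`: `bc - ad ≥ (a - c)(c - d) ≥ 0`
  have key : 1 / p₁ * (1 / q₂) ≤ 1 / p₂ * (1 / q₁) := by
    nlinarith [mul_nonneg (sub_nonneg.2 h₁) (sub_nonneg.2 h₂), one_div_pos.2 hq₁]
  rw [div_mul_div_comm, div_mul_div_comm, one_mul,
    one_div_le_one_div (by positivity) (by positivity)] at key
  linarith

def SumDominated {Z W : Type*} (C : ℝ) (F : Z → ℝ) (G : Z → W → ℝ) : Prop :=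
  ∀ (m : ℕ) (z : Fin m → Z), ∑ j, F (z j) ≤ C * ⨆ w, ∑ j, G (z j) w

namespace SumDominated

variable {Z W ι : Type*} [Fintype ι] {C : ℝ} {F : Z → ℝ} {G : Z → W → ℝ}

lemma sum_natCast_mul_le (hFG : SumDominated C F G) (n : ι → ℕ) (z : ι → Z) :
    ∑ i, (n i : ℝ) * F (z i) ≤ C * ⨆ w, ∑ i, (n i : ℝ) * G (z i) w := by
  -- list each `z i` exactly `n i` times
  let e : (Σ i, Fin (n i)) ≃ Fin (∑ i, n i) := Fintype.equivFinOfCardEq (by simp)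
  have hrep : ∀ f : Z → ℝ, ∑ k, f (z (e.symm k).1) = ∑ i, (n i : ℝ) * f (z i) := fun f => by
    rw [e.symm.sum_comp (fun k => f (z k.1)), ← univ_sigma_univ, sum_sigma]
    simp
  calc ∑ i, (n i : ℝ) * F (z i) = ∑ k, F (z (e.symm k).1) := (hrep F).symm
    _ ≤ C * ⨆ w, ∑ k, G (z (e.symm k).1) w := hFG _ _
    _ = C * ⨆ w, ∑ i, (n i : ℝ) * G (z i) w := by
        congr 1
        exact iSup_congr fun w => hrep fun x => G x w

lemma sum_mul_le (hFG : SumDominated C F G) (hC : 0 ≤ C) (hF : ∀ z, 0 ≤ F z)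
    (hG : ∀ z w, 0 ≤ G z w) (hGbdd : ∀ z, BddAbove (Set.range (G z))) {lam : ι → ℝ}
    (hlam : ∀ i, 0 ≤ lam i) (z : ι → Z) :
    ∑ i, lam i * F (z i) ≤ C * ⨆ w, ∑ i, lam i * G (z i) w := by
  set M := ⨆ w, ∑ i, lam i * G (z i) w
  set D := ∑ i, ⨆ w, G (z i) w
  have hGle : ∀ i w, G (z i) w ≤ ⨆ w, G (z i) w := fun i w => le_ciSup (hGbdd (z i)) w
  have hbdd : BddAbove (Set.range fun w => ∑ i, lam i * G (z i) w) := by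
    refine ⟨∑ i, lam i * ⨆ w, G (z i) w, ?_⟩
    rintro _ ⟨w, rfl⟩
    exact sum_le_sum fun i _ => mul_le_mul_of_nonneg_left (hGle i w) (hlam i)
  have hM : ∀ w, ∑ i, lam i * G (z i) w ≤ M := le_ciSup hbdd
  have hM0 : 0 ≤ M := Real.iSup_nonneg fun w => sum_nonneg fun i _ => mul_nonneg (hlam i) (hG _ w)
  have hD0 : 0 ≤ D := sum_nonneg fun i _ => Real.iSup_nonneg (hG (z i))
  have hround : ∀ K : ℕ, 0 < K → ∑ i, lam i * F (z i) ≤ C * M + C * D / K := by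
    intro K hK
    have hK : (0 : ℝ) < K := Nat.cast_pos.2 hK
    set n : ι → ℕ := fun i => ⌈lam i * K⌉₊
    have hnG : ⨆ w, ∑ i, (n i : ℝ) * G (z i) w ≤ K * M + D := by
      refine Real.iSup_le (fun w => ?_) (by positivity)
      calc ∑ i, (n i : ℝ) * G (z i) w ≤ ∑ i, (lam i * K + 1) * G (z i) w :=
            sum_le_sum fun i _ => mul_le_mul_of_nonneg_right
              (Nat.ceil_lt_add_one (mul_nonneg (hlam i) hK.le)).le (hG _ w)
        _ = K * ∑ i, lam i * G (z i) w + ∑ i, G (z i) w := by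
            rw [mul_sum, ← sum_add_distrib]
            exact sum_congr rfl fun i _ => by ring
        _ ≤ K * M + D := add_le_add (mul_le_mul_of_nonneg_left (hM w) hK.le)
            (sum_le_sum fun i _ => hGle i w)
    have hKF : K * ∑ i, lam i * F (z i) ≤ C * (K * M + D) :=
      calc K * ∑ i, lam i * F (z i) = ∑ i, lam i * K * F (z i) := by
            rw [mul_sum]; exact sum_congr rfl fun i _ => by ring
        _ ≤ ∑ i, (n i : ℝ) * F (z i) := by gcongr with i; exacts [hF _, Nat.le_ceil _]
        _ ≤ C * ⨆ w, ∑ i, (n i : ℝ) * G (z i) w := hFG.sum_natCast_mul_le n z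
        _ ≤ C * (K * M + D) := by gcongr
    rw [show C * M + C * D / K = C * (K * M + D) / K by field_simp, le_div_iff₀ hK, mul_comm]
    exact hKF
  have hlim : Tendsto (fun K : ℕ => C * M + C * D / K) atTop (𝓝 (C * M)) := by
    simpa using tendsto_const_nhds.add (tendsto_const_div_atTop_nhds_zero_nat (C * D))
  exact ge_of_tendsto hlim (eventually_atTop.2 ⟨1, fun K hK => hround K hK⟩)

lemma rpow_sum_rpow_le {a : Z → ℝ} {R : Z → W → ℝ} {p₁ p₂ q₁ q₂ : ℝ}
    (hFG : SumDominated C (fun z => a z ^ q₁) fun z w => R z w ^ p₁) (hC : 0 ≤ C)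
    (ha : ∀ z, 0 ≤ a z) (hR : ∀ z w, 0 ≤ R z w)
    (hRbdd : ∀ z, BddAbove (Set.range fun w => R z w ^ p₁))
    (hp₁ : 0 < p₁) (hp₂ : 0 < p₂) (hq₁ : 0 < q₁) (hq : q₁ < q₂) (hpq : p₂ * q₁ ≤ p₁ * q₂)
    (z : ι → Z) (hB : BddAbove (Set.range fun w => ∑ i, R (z i) w ^ p₂)) :
    (∑ i, a (z i) ^ q₂) ^ (q₁ / q₂) ≤ C * (⨆ w, ∑ i, R (z i) w ^ p₂) ^ (p₁ / p₂) := by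
  set T := ∑ i, a (z i) ^ q₂
  set B := ⨆ w, ∑ i, R (z i) w ^ p₂
  have hT0 : 0 ≤ T := sum_nonneg fun i _ => Real.rpow_nonneg (ha _) _
  have hB0 : 0 ≤ B := Real.iSup_nonneg fun w => sum_nonneg fun i _ => Real.rpow_nonneg (hR _ w) _
  refine Real.rpow_le_of_le_rpow_one_sub_mul hT0 (div_pos hq₁ (hq₁.trans hq))
    (mul_nonneg hC (Real.rpow_nonneg hB0 _)) ?_
  calc T = ∑ i, a (z i) ^ (q₂ - q₁) * a (z i) ^ q₁ := sum_congr rfl fun i _ => by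
        rw [← Real.rpow_add' (ha _) (by linarith), sub_add_cancel]
    _ ≤ C * ⨆ w, ∑ i, a (z i) ^ (q₂ - q₁) * R (z i) w ^ p₁ :=
        hFG.sum_mul_le hC (fun z => Real.rpow_nonneg (ha z) _)
          (fun z w => Real.rpow_nonneg (hR z w) _) hRbdd (fun i => Real.rpow_nonneg (ha _) _) z
    _ ≤ C * (T ^ (1 - q₁ / q₂) * B ^ (p₁ / p₂)) := by
        refine mul_le_mul_of_nonneg_left (Real.iSup_le (fun w => ?_) ?_) hC
        · refine (Real.sum_rpow_sub_mul_rpow_le univ (fun i => ha (z i)) (fun i => hR (z i) w)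
            hp₁ hp₂ hq₁ hq hpq).trans ?_
          gcongr
          · exact sum_nonneg fun i _ => Real.rpow_nonneg (hR _ w) _
          · exact le_ciSup hB w
        · exact mul_nonneg (Real.rpow_nonneg hT0 _) (Real.rpow_nonneg hB0 _)
    _ = T ^ (1 - q₁ / q₂) * (C * B ^ (p₁ / p₂)) := by ring

end SumDominated

theorem stmt2_general {Z V W : Type*}
    (S : Z → V → ℝ) (R : Z → W → ℝ)
    (hS : ∀ z v, 0 ≤ S z v) (hR : ∀ z w, 0 ≤ R z w)
    (p₁ p₂ q₁ q₂ : ℝ)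
    (hp₁ : 1 ≤ p₁) (hq₁ : 1 ≤ q₁) (hq₁₂ : q₁ ≤ q₂)
    (hpq₁ : p₁ ≤ q₁)
    (hstar : 1 / p₁ - 1 / q₁ ≤ 1 / p₂ - 1 / q₂)
    (hlt : p₁ < p₂)
    (hRbdd : ∀ (p : ℝ), p = p₁ ∨ p = p₂ → ∀ (m : ℕ) (z : Fin m → Z),
      BddAbove (Set.range fun w : W => ∑ j, R (z j) w ^ p))
    (hSbdd : ∀ (q : ℝ), q = q₁ ∨ q = q₂ → ∀ (m : ℕ) (z : Fin m → Z),
      BddAbove (Set.range fun v : V => ∑ j, S (z j) v ^ q))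
    (C : ℝ) (hC : 0 < C)
    (h : ∀ (m : ℕ) (z : Fin m → Z),
      (⨆ v : V, ∑ j, S (z j) v ^ q₁) ≤ C * ⨆ w : W, ∑ j, R (z j) w ^ p₁) :
    ∀ (m : ℕ) (z : Fin m → Z),
      (⨆ v : V, ∑ j, S (z j) v ^ q₂) ^ (q₁ * p₂ / (q₂ * p₁)) ≤
        C ^ (p₂ / p₁) * ⨆ w : W, ∑ j, R (z j) w ^ p₂ := by
  intro m z
  have hp₁0 : 0 < p₁ := zero_lt_one.trans_le hp₁
  have hp₂0 : 0 < p₂ := hp₁0.trans hlt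
  have hq₁0 : 0 < q₁ := zero_lt_one.trans_le hq₁
  have hq₂0 : 0 < q₂ := hq₁0.trans_le hq₁₂
  have hq : q₁ < q₂ := lt_of_one_div_sub_le hp₁0 hlt hq₁₂ hstar
  have hpq : p₂ * q₁ ≤ p₁ * q₂ := mul_le_mul_of_one_div_sub_le hp₁0 hp₂0 hq₁0 hpq₁ hq₁₂ hstar
  have hFG (v : V) : SumDominated C (fun z => S z v ^ q₁) fun z w => R z w ^ p₁ :=
    fun m z => (le_ciSup (hSbdd q₁ (.inl rfl) m z) v).trans (h m z)
  have hRbdd₁ (z : Z) : BddAbove (Set.range fun w => R z w ^ p₁) := by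
    simpa using hRbdd p₁ (.inl rfl) 1 fun _ => z
  set B := ⨆ w, ∑ j, R (z j) w ^ p₂
  have hB0 : 0 ≤ B := Real.iSup_nonneg fun w => sum_nonneg fun i _ => Real.rpow_nonneg (hR _ w) _
  have hT0 (v : V) : 0 ≤ ∑ j, S (z j) v ^ q₂ := sum_nonneg fun j _ => Real.rpow_nonneg (hS _ v) _
  refine Real.iSup_rpow_le hT0 (by positivity)
    (mul_nonneg (Real.rpow_nonneg hC.le _) hB0) fun v => ?_
  calc (∑ j, S (z j) v ^ q₂) ^ (q₁ * p₂ / (q₂ * p₁))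
      = ((∑ j, S (z j) v ^ q₂) ^ (q₁ / q₂)) ^ (p₂ / p₁) := by
        rw [← Real.rpow_mul (hT0 v), div_mul_div_comm]
    _ ≤ (C * B ^ (p₁ / p₂)) ^ (p₂ / p₁) := by
        refine Real.rpow_le_rpow (Real.rpow_nonneg (hT0 v) _) ?_ (by positivity)
        exact (hFG v).rpow_sum_rpow_le hC.le (hS · v) hR hRbdd₁ hp₁0 hp₂0 hq₁0 hq hpq z
          (hRbdd p₂ (.inr rfl) m z)
    _ = C ^ (p₂ / p₁) * B := by
        rw [Real.mul_rpow hC.le (Real.rpow_nonneg hB0 _), ← Real.rpow_mul hB0,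
          div_mul_div_cancel₀ hp₂0.ne', div_self hp₁0.ne', Real.rpow_one]

/-- **Inclusion Principle.** Let `Z, V, W` be nonempty sets,
`S : Z × V → [0,∞)`, `R : Z × W → [0,∞)`, and `p₁, p₂, q₁, q₂` satisfy condition (★)
with `p₁ < p₂`.  If `sup_v ∑ S(zⱼ,v)^{q₁} ≤ C ⋅ sup_w ∑ R(zⱼ,w)^{p₁}` for all finite
families, then `(sup_v ∑ S(zⱼ,v)^{q₂})^{q₁p₂/(q₂p₁)} ≤ C^{p₂/p₁} ⋅ sup_w ∑ R(zⱼ,w)^{p₂}`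
for all finite families. -/
theorem stmt2 {Z V W : Type*} [Nonempty Z] [Nonempty V] [Nonempty W]
    (S : Z → V → ℝ) (R : Z → W → ℝ)
    (hS : ∀ z v, 0 ≤ S z v) (hR : ∀ z w, 0 ≤ R z w)
    (p₁ p₂ q₁ q₂ : ℝ)
    (hp₁ : 1 ≤ p₁) (hp₁₂ : p₁ ≤ p₂) (hq₁ : 1 ≤ q₁) (hq₁₂ : q₁ ≤ q₂)
    (hpq₁ : p₁ ≤ q₁) (hpq₂ : p₂ ≤ q₂)
    (hstar : 1 / p₁ - 1 / q₁ ≤ 1 / p₂ - 1 / q₂)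
    (hlt : p₁ < p₂)
    (hRbdd : ∀ (p : ℝ), p = p₁ ∨ p = p₂ → ∀ (m : ℕ) (z : Fin m → Z),
      BddAbove (Set.range fun w : W => ∑ j, R (z j) w ^ p))
    (hSbdd : ∀ (q : ℝ), q = q₁ ∨ q = q₂ → ∀ (m : ℕ) (z : Fin m → Z),
      BddAbove (Set.range fun v : V => ∑ j, S (z j) v ^ q))
    (C : ℝ) (hC : 0 < C)
    (h : ∀ (m : ℕ) (z : Fin m → Z),
      (⨆ v : V, ∑ j, S (z j) v ^ q₁) ≤ C * ⨆ w : W, ∑ j, R (z j) w ^ p₁) :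
    ∀ (m : ℕ) (z : Fin m → Z),
      (⨆ v : V, ∑ j, S (z j) v ^ q₂) ^ (q₁ * p₂ / (q₂ * p₁)) ≤
        C ^ (p₂ / p₁) * ⨆ w : W, ∑ j, R (z j) w ^ p₂ :=
  stmt2_general S R hS hR p₁ p₂ q₁ q₂ hp₁ hq₁ hq₁₂ hpq₁ hstar hlt hRbdd hSbdd C hC h
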